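/- Let X be a finite set and f : X → ℝ^M. For a reference point r ∈ ℝ^M, define HV_r(P) as the Lebesgue measure of the union over y ∈ P of the boxes [r, y] = {z : r ≤ z ≤ y componentwise}, restricted to points y with y ≥ r. Then for any two functions f, g : X → ℝ^M with values componentwise ≥ r and bounded above by some u ∈ ℝ^M, |HV_r(f(X)) − HV_r(g(X))| ≤ M · (∏_{j} (u_j − r_j)) / (min_j (u_j − r_j)) · max_{x∈X} ||f(x) − g(x)||_∞, i.e., the hypervolume of the image set is Lipschitz in the function with an explicit constant. -/

import Mathlib

/-!
Let `ε = max_x ‖f x - g x‖_∞`. A point of a box `[r, f x]` either exceeds `r` by at least `ε`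
in every coordinate, and then its translate by `-ε` lies in `[r, g x]`, or it lies in one of
the slabs `{z ∈ [r, u] : z_j ≤ r_j + ε}`, of volume `ε ∏_{k ≠ j} (u_k - r_k)`. Hence
`HV_r(f(X)) ≤ HV_r(g(X)) + ε ∑_j ∏_{k ≠ j} (u_k - r_k)`, symmetrically in `f` and `g`, and
each face measure `∏_{k ≠ j} (u_k - r_k)` is at most `∏_k (u_k - r_k) / min_k (u_k - r_k)`.
-/

open MeasureTheory

/-- Dominated hypervolume with reference point `r`: Lebesgue measure of the union of the
boxes `[r, y]` over points `y ∈ P` dominating `r`. -/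
noncomputable def hypervolume {M : ℕ} (r : Fin M → ℝ) (P : Set (Fin M → ℝ)) : ℝ :=
  (volume (⋃ y ∈ {y ∈ P | r ≤ y}, Set.Icc r y)).toReal

open Set Function

lemma hypervolume_range {X : Type*} {M : ℕ} (r : Fin M → ℝ) (f : X → Fin M → ℝ)
    (hf : ∀ x, r ≤ f x) :
    hypervolume r (range f) = (volume (⋃ x, Icc r (f x))).toReal := by
  have hdom : {y ∈ range f | r ≤ y} = range f :=
    sep_eq_self_iff_mem_true.2 (by rintro _ ⟨x, rfl⟩; exact hf x)
  rw [hypervolume, hdom, biUnion_range]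

section Boxes

variable {ι : Type*} [Fintype ι] [DecidableEq ι]

/-- The sum of the `(card ι - 1)`-dimensional measures of the faces of `[r, u]` through `r`. -/
def boxFacesMeasure (r u : ι → ℝ) : ℝ :=
  ∑ j, ∏ k ∈ Finset.univ.erase j, (u k - r k)

lemma boxFacesMeasure_nonneg {r u : ι → ℝ} (hru : r ≤ u) : 0 ≤ boxFacesMeasure r u :=
  Finset.sum_nonneg fun _ _ => Finset.prod_nonneg fun k _ => sub_nonneg.2 (hru k)

lemma boxFacesMeasure_le {r u : ι → ℝ} {m : ℝ} (hm : 0 < m) (hmru : ∀ k, m ≤ u k - r k) :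
    boxFacesMeasure r u ≤ Fintype.card ι * (∏ k, (u k - r k)) / m := by
  have hface (j : ι) : ∏ k ∈ Finset.univ.erase j, (u k - r k) ≤ (∏ k, (u k - r k)) / m := by
    rw [le_div_iff₀ hm, ← Finset.prod_erase_mul _ _ (Finset.mem_univ j)]
    exact mul_le_mul_of_nonneg_left (hmru j)
      (Finset.prod_nonneg fun k _ => hm.le.trans (hmru k))
  calc boxFacesMeasure r u ≤ ∑ _j : ι, (∏ k, (u k - r k)) / m :=
        Finset.sum_le_sum fun j _ => hface j
    _ = Fintype.card ι * (∏ k, (u k - r k)) / m := by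
        rw [Finset.sum_const, Finset.card_univ, nsmul_eq_mul, mul_div]

lemma volume_Icc_update_add {r u : ι → ℝ} (hru : r ≤ u) (j : ι) {ε : ℝ} (hε : 0 ≤ ε) :
    volume (Icc r (update u j (r j + ε))) =
      ENNReal.ofReal (ε * ∏ k ∈ Finset.univ.erase j, (u k - r k)) := by
  rw [Real.volume_Icc_pi, ← Finset.mul_prod_erase _ _ (Finset.mem_univ j), update_self,
    add_sub_cancel_left, ENNReal.ofReal_mul hε,
    ENNReal.ofReal_prod_of_nonneg fun k _ => sub_nonneg.2 (hru k)]
  congr 1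
  exact Finset.prod_congr rfl fun k hk => by rw [update_of_ne (Finset.ne_of_mem_erase hk)]

lemma iUnion_Icc_subset_preimage_union_slabs {X : Type*} {r u : ι → ℝ} {ε : ℝ}
    {f g : X → ι → ℝ} (hf : ∀ x, f x ≤ u) (hfg : ∀ x j, f x j - g x j ≤ ε) :
    ⋃ x, Icc r (f x) ⊆
      (fun z => (fun _ => -ε) + z) ⁻¹' (⋃ x, Icc r (g x)) ∪
        ⋃ j, Icc r (update u j (r j + ε)) := by
  simp only [subset_def, mem_iUnion, mem_Icc, mem_union, mem_preimage]
  rintro z ⟨x, hrz, hzf⟩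
  by_cases hfar : ∀ k, r k + ε ≤ z k
  · refine .inl ⟨x, fun k => ?_, fun k => ?_⟩
    · simp only [Pi.add_apply]; linarith [hfar k]
    · simp only [Pi.add_apply]; linarith [hzf k, hfg x k]
  · obtain ⟨j, hj⟩ := not_forall.1 hfar
    refine .inr ⟨j, hrz, fun k => ?_⟩
    rcases eq_or_ne k j with rfl | hkj
    · rw [update_self]; exact (not_le.1 hj).le
    · rw [update_of_ne hkj]; exact (hzf k).trans (hf x k)

lemma volume_iUnion_Icc_le_add {X : Type*} {r u : ι → ℝ} (hru : r ≤ u) {ε : ℝ}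
    (hε : 0 ≤ ε) {f g : X → ι → ℝ} (hf : ∀ x, f x ≤ u) (hfg : ∀ x j, f x j - g x j ≤ ε) :
    volume (⋃ x, Icc r (f x)) ≤
      volume (⋃ x, Icc r (g x)) + ENNReal.ofReal (ε * boxFacesMeasure r u) := by
  calc volume (⋃ x, Icc r (f x))
      ≤ volume ((fun z => (fun _ => -ε) + z) ⁻¹' (⋃ x, Icc r (g x))) +
          volume (⋃ j, Icc r (update u j (r j + ε))) :=
        (measure_mono (iUnion_Icc_subset_preimage_union_slabs hf hfg)).trans
          (measure_union_le _ _)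
    _ ≤ volume (⋃ x, Icc r (g x)) + ∑ j, volume (Icc r (update u j (r j + ε))) := by
        rw [measure_preimage_add]
        exact add_le_add_right (measure_iUnion_fintype_le _ _) _
    _ = volume (⋃ x, Icc r (g x)) + ENNReal.ofReal (ε * boxFacesMeasure r u) := by
        simp_rw [volume_Icc_update_add hru _ hε, boxFacesMeasure, Finset.mul_sum]
        rw [ENNReal.ofReal_sum_of_nonneg fun j _ =>
          mul_nonneg hε (Finset.prod_nonneg fun k _ => sub_nonneg.2 (hru k))]

lemma abs_volume_iUnion_Icc_sub_le {X : Type*} {r u : ι → ℝ} (hru : r ≤ u) {ε : ℝ}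
    (hε : 0 ≤ ε) {f g : X → ι → ℝ} (hf : ∀ x, f x ≤ u) (hg : ∀ x, g x ≤ u)
    (hfg : ∀ x j, |f x j - g x j| ≤ ε) :
    |(volume (⋃ x, Icc r (f x))).toReal - (volume (⋃ x, Icc r (g x))).toReal| ≤
      ε * boxFacesMeasure r u := by
  have hfin (h : X → ι → ℝ) (hh : ∀ x, h x ≤ u) : volume (⋃ x, Icc r (h x)) ≠ ⊤ :=
    ((measure_mono (iUnion_subset fun x => Icc_subset_Icc_right (hh x))).trans_lt
      measure_Icc_lt_top).ne
  have one_sided : ∀ p q : X → ι → ℝ, (∀ x, p x ≤ u) → (∀ x, q x ≤ u) →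
      (∀ x j, p x j - q x j ≤ ε) →
      (volume (⋃ x, Icc r (p x))).toReal ≤
        (volume (⋃ x, Icc r (q x))).toReal + ε * boxFacesMeasure r u := by
    intro p q hp hq hpq
    simpa only [ENNReal.toReal_ofReal (mul_nonneg hε (boxFacesMeasure_nonneg hru))] using
      ENNReal.toReal_le_add (volume_iUnion_Icc_le_add hru hε hp hpq) (hfin q hq)
        ENNReal.ofReal_ne_top
  rw [abs_sub_le_iff]
  exact ⟨by linarith [one_sided f g hf hg fun x j => (abs_le.1 (hfg x j)).2],
    by linarith [one_sided g f hg hf fun x j => by linarith [(abs_le.1 (hfg x j)).1]]⟩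

end Boxes

/-- For `f, g : X → ℝ^M` on a finite nonempty `X` with values in `[r, u]`
componentwise, the hypervolume of the image set is Lipschitz in the function:
`|HV_r(f(X)) − HV_r(g(X))| ≤ M * (∏_j (u_j − r_j)) / (min_j (u_j − r_j)) * max_x ‖f x − g x‖_∞`. -/
theorem stmt8 {X : Type*} [Fintype X] [Nonempty X] {M : ℕ} [NeZero M]
    (r u : Fin M → ℝ) (hru : ∀ j, r j < u j)
    (f g : X → (Fin M → ℝ))
    (hf : ∀ x, r ≤ f x ∧ f x ≤ u) (hg : ∀ x, r ≤ g x ∧ g x ≤ u) :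
    |hypervolume r (Set.range f) - hypervolume r (Set.range g)| ≤
      (M : ℝ) * (∏ j, (u j - r j)) / (Finset.univ.inf' Finset.univ_nonempty
          (fun j => u j - r j)) *
        Finset.univ.sup' Finset.univ_nonempty (fun x => ‖f x - g x‖) := by
  set ε := Finset.univ.sup' Finset.univ_nonempty fun x => ‖f x - g x‖
  set m := Finset.univ.inf' Finset.univ_nonempty fun j => u j - r j
  have hdist_le : ∀ x, ‖f x - g x‖ ≤ ε := fun x =>
    Finset.le_sup' (fun x => ‖f x - g x‖) (Finset.mem_univ x)
  have hε : 0 ≤ ε := (norm_nonneg _).trans (hdist_le (Classical.arbitrary X))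
  have hdist : ∀ x j, |f x j - g x j| ≤ ε := fun x j =>
    (norm_le_pi_norm (f x - g x) j).trans (hdist_le x)
  have hfaces : boxFacesMeasure r u ≤ M * (∏ j, (u j - r j)) / m := by
    simpa using boxFacesMeasure_le ((Finset.lt_inf'_iff _).2 fun j _ => sub_pos.2 (hru j))
      fun k => Finset.inf'_le _ (Finset.mem_univ k)
  rw [hypervolume_range r f fun x => (hf x).1, hypervolume_range r g fun x => (hg x).1]
  calc _ ≤ ε * boxFacesMeasure r u :=
        abs_volume_iUnion_Icc_sub_le (fun j => (hru j).le) hε (fun x => (hf x).2)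
          (fun x => (hg x).2) hdist
    _ ≤ ε * (M * (∏ j, (u j - r j)) / m) := mul_le_mul_of_nonneg_left hfaces hε
    _ = M * (∏ j, (u j - r j)) / m * ε := mul_comm _ _
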